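/- arXiv:2105.06103 — 6 statements merged into one kernel-verified Lean document; each statement's English description precedes it below -/
import Mathlib

section
/- For every dimension d ≥ 2 and every integer n ≥ d, the cardinality s_d(n) of the ℓ¹-sphere of radius n in ℤ^d satisfies (d-1)^{-(d-1)} · n^{d-1} ≤ s_d(n) ≤ 2^{2d-1} · e^{d-1} · n^{d-1}. -/
/-- For d ≥ 2 and n ≥ d, (d-1)^{-(d-1)} n^{d-1} ≤ s_d(n) ≤ 2^{2d-1} e^{d-1} n^{d-1}. -/
theorem sphere_count_bounds (d n : ℕ) (hd : 2 ≤ d) (hn : d ≤ n) :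
    (((d : ℝ) - 1) ^ (d - 1))⁻¹ * (n : ℝ) ^ (d - 1) ≤
      (Nat.card {x : Fin d → ℤ // ∑ i, (x i).natAbs = n} : ℝ) ∧
    (Nat.card {x : Fin d → ℤ // ∑ i, (x i).natAbs = n} : ℝ) ≤
      2 ^ (2 * d - 1) * Real.exp 1 ^ (d - 1) * (n : ℝ) ^ (d - 1) := by
  obtain ⟨m, rfl⟩ : ∃ m, d = m + 1 := ⟨d - 1, by omega⟩
  have hm : 1 ≤ m := by omega
  have hn1 : 1 ≤ n := by omega
  set S := {x : Fin (m+1) → ℤ // ∑ i, (x i).natAbs = n} with hS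
  have hcoord : ∀ (x : S) (i : Fin (m+1)), (x.1 i) ∈ Finset.Icc (-(n:ℤ)) n := by
    intro x i
    have h1 : (x.1 i).natAbs ≤ ∑ j, (x.1 j).natAbs := Finset.single_le_sum
      (f := fun i => (x.1 i).natAbs) (fun _ _ => Nat.zero_le _) (Finset.mem_univ i)
    rw [x.2] at h1
    simp only [Finset.mem_Icc]
    omega
  -- upper bound injection
  let g : S → (Fin m → (Finset.Icc (-(n:ℤ)) n)) × Bool :=
    fun x => (fun i => ⟨x.1 i.castSucc, hcoord x _⟩, decide (0 ≤ x.1 (Fin.last m)))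
  have hg : Function.Injective g := by
    intro x y hxy
    rw [Prod.ext_iff] at hxy
    obtain ⟨h1, h2⟩ := hxy
    have h1' : ∀ i : Fin m, x.1 i.castSucc = y.1 i.castSucc := fun i =>
      Subtype.ext_iff.mp (congrFun h1 i)
    have hsx := x.2
    have hsy := y.2
    rw [Fin.sum_univ_castSucc] at hsx hsy
    have hsum : ∑ i : Fin m, (x.1 i.castSucc).natAbs = ∑ i : Fin m, (y.1 i.castSucc).natAbs :=
      Finset.sum_congr rfl fun i _ => by rw [h1' i]
    have habs : (x.1 (Fin.last m)).natAbs = (y.1 (Fin.last m)).natAbs := by omega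
    have hsign : (0 ≤ x.1 (Fin.last m)) ↔ (0 ≤ y.1 (Fin.last m)) := decide_eq_decide.mp h2
    have hlast : x.1 (Fin.last m) = y.1 (Fin.last m) := by omega
    apply Subtype.ext
    funext j
    refine Fin.lastCases hlast h1' j
  haveI : Finite S := Finite.of_injective g hg
  have hcount_up : Nat.card S ≤ 2 * (2 * n + 1) ^ m := by
    have := Nat.card_le_card_of_injective g hg
    rw [Nat.card_eq_fintype_card (α := (Fin m → (Finset.Icc (-(n:ℤ)) n)) × Bool)] at this
    simp only [Fintype.card_prod, Fintype.card_fun, Fintype.card_coe, Int.card_Icc,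
      Fintype.card_bool, Fintype.card_fin] at this
    have hc : ((n : ℤ) + 1 - -(n : ℤ)).toNat = 2 * n + 1 := by omega
    rw [hc] at this
    omega
  -- lower bound injection
  set M := (n - 1) / m + 1 with hM
  have hdm := Nat.div_add_mod (n - 1) m
  have hmod := Nat.mod_lt (n - 1) (show 0 < m by omega)
  have hMub : m * (M - 1) ≤ n - 1 := by
    simp only [hM, Nat.add_sub_cancel]
    omega
  have hMlb : n ≤ m * M := by
    have key : n ≤ m * ((n - 1) / m) + m := by omega
    calc n ≤ m * ((n - 1) / m) + m := key
      _ = m * M := by rw [hM, Nat.mul_add, Nat.mul_one]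
  let f : (Fin m → Fin M) → S := fun y =>
    ⟨fun j => Fin.lastCases (motive := fun _ => ℤ)
        (((n - ∑ i, (y i : ℕ) : ℕ) : ℤ)) (fun i => ((y i : ℕ) : ℤ)) j, by
      have hsle : ∑ i, (y i : ℕ) ≤ m * (M - 1) := by
        calc ∑ i, (y i : ℕ) ≤ ∑ _i : Fin m, (M - 1) :=
              Finset.sum_le_sum fun i _ => by have := (y i).2; omega
          _ = m * (M - 1) := by simp [Finset.sum_const, Finset.card_univ, mul_comm]
      rw [Fin.sum_univ_castSucc]
      simp only [Fin.lastCases_castSucc, Fin.lastCases_last, Int.natAbs_natCast]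
      omega⟩
  have hf : Function.Injective f := by
    intro y y' hyy
    have := congrArg Subtype.val hyy
    funext i
    have hi := congrFun this i.castSucc
    simp only [f, Fin.lastCases_castSucc] at hi
    exact Fin.ext (Nat.cast_injective hi)
  have hcount_lo : M ^ m ≤ Nat.card S := by
    have := Nat.card_le_card_of_injective f hf
    simpa [Nat.card_eq_fintype_card] using this
  constructor
  · -- lower bound
    have hcast : ((m + 1 : ℕ) : ℝ) - 1 = m := by push_cast; ring
    rw [hcast]
    simp only [Nat.add_sub_cancel]
    have hmpos : (0:ℝ) < m := by exact_mod_cast hm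
    have hnM : (n : ℝ) / m ≤ M := by
      rw [div_le_iff₀ hmpos]
      calc (n:ℝ) ≤ (m * M : ℕ) := by exact_mod_cast hMlb
        _ = M * m := by push_cast; ring
    have h1 : ((m:ℝ) ^ m)⁻¹ * n ^ m = ((n:ℝ)/m) ^ m := by
      rw [div_pow]; ring
    rw [h1]
    calc ((n:ℝ)/m) ^ m ≤ (M:ℝ) ^ m := by
          apply pow_le_pow_left₀ (by positivity) hnM
      _ = ((M ^ m : ℕ) : ℝ) := by push_cast; ring
      _ ≤ Nat.card S := by exact_mod_cast hcount_lo
  · -- upper bound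
    simp only [Nat.add_sub_cancel]
    have h2d : 2 * (m + 1) - 1 = 2 * m + 1 := by omega
    rw [h2d]
    have he : (3:ℝ) ≤ 4 * Real.exp 1 := by
      have := Real.add_one_le_exp 1
      nlinarith
    calc (Nat.card S : ℝ) ≤ ((2 * (2 * n + 1) ^ m : ℕ) : ℝ) := by exact_mod_cast hcount_up
      _ = 2 * ((2 * n + 1 : ℕ) : ℝ) ^ m := by push_cast; ring
      _ ≤ 2 * ((3:ℝ) * n) ^ m := by
          apply mul_le_mul_of_nonneg_left _ (by norm_num)
          apply pow_le_pow_left₀ (by positivity)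
          push_cast; nlinarith [hn1, (show (1:ℝ) ≤ n by exact_mod_cast hn1)]
      _ ≤ 2 * ((4 * Real.exp 1) * n) ^ m := by
          apply mul_le_mul_of_nonneg_left _ (by norm_num)
          apply pow_le_pow_left₀ (by positivity)
          apply mul_le_mul_of_nonneg_right he (by positivity)
      _ = 2 ^ (2 * m + 1) * Real.exp 1 ^ m * n ^ m := by
          rw [mul_pow, mul_pow, pow_succ, pow_mul]
          ring
end

section
/- Let k ≥ 1 and let G be a finite nonempty connected simple graph. Then the vertex set of G can be covered by at most ⌈|v(G)|/k⌉ connected subgraphs, each having at most 2k vertices. -/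
open SimpleGraph
lemma reach_induce {V : Type*} {G : SimpleGraph V} {s : Set V} :
    ∀ {a b : V} (p : G.Walk a b), (∀ x ∈ p.support, x ∈ s) →
    ∀ (ha : a ∈ s) (hb : b ∈ s), (G.induce s).Reachable ⟨a, ha⟩ ⟨b, hb⟩ := by
  intro a b p
  induction p with
  | nil => intro _ ha hb; rfl
  | @cons u v w h q ih =>
    intro hsup ha hb
    have hc : v ∈ s := hsup v (by simp [Walk.support_cons])
    refine Reachable.trans ?_ (ih (fun x hx => hsup x (by simp [Walk.support_cons, hx])) hc hb)
    exact SimpleGraph.Adj.reachable (by simpa using h)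

lemma exists_noncut {W : Type*} [Fintype W] (H : SimpleGraph W) (hH : H.Connected)
    (h2 : 2 ≤ Fintype.card W) :
    ∃ v : W, (H.induce {v}ᶜ).Connected ∧ ∃ u, H.Adj v u := by
  classical
  have hne : Nonempty W := hH.nonempty
  obtain ⟨r⟩ := hne
  obtain ⟨v, -, hv⟩ := Finset.exists_max_image (Finset.univ : Finset W) (H.dist r) ⟨r, Finset.mem_univ r⟩
  obtain ⟨u', hu'⟩ := Fintype.exists_ne_of_one_lt_card h2 r
  have hdpos : 0 < H.dist r v := by
    have h1 : 0 < H.dist r u' := hH.pos_dist_of_ne (Ne.symm hu')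
    exact lt_of_lt_of_le h1 (hv u' (Finset.mem_univ u'))
  have hvr : v ≠ r := by
    intro h; subst h; simp [SimpleGraph.dist_self] at hdpos
  have key : ∀ x : W, x ≠ v → ∃ p : H.Walk x r, v ∉ p.support := by
    intro x hx
    obtain ⟨p, hp⟩ := hH.exists_walk_length_eq_dist x r
    refine ⟨p, fun hmem => ?_⟩
    have hsplit := congrArg Walk.length (p.take_spec hmem)
    rw [Walk.length_append] at hsplit
    have h1 : 1 ≤ (p.takeUntil v hmem).length := by
      rcases Nat.eq_zero_or_pos (p.takeUntil v hmem).length with h0 | h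
      · exact absurd (Walk.eq_of_length_eq_zero h0) hx
      · exact h
    have h2' : H.dist v r ≤ (p.dropUntil v hmem).length := SimpleGraph.dist_le _
    have hxr : H.dist r x ≤ H.dist r v := hv x (Finset.mem_univ x)
    have hlen : p.length = H.dist x r := hp
    have hcomm : H.dist r x = H.dist x r := H.dist_comm
    have hcomm2 : H.dist r v = H.dist v r := H.dist_comm
    omega
  have hrs : r ∈ ({v}ᶜ : Set W) := by simpa using (Ne.symm hvr)
  haveI hnon : Nonempty ↥({v}ᶜ : Set W) := ⟨⟨r, hrs⟩⟩
  refine ⟨v, Connected.mk ?_, ?_⟩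
  · rintro ⟨x, hx⟩ ⟨y, hy⟩
    have hx' : x ≠ v := by simpa using hx
    have hy' : y ≠ v := by simpa using hy
    obtain ⟨p, hp⟩ := key x hx'
    obtain ⟨q, hq⟩ := key y hy'
    have h1 := reach_induce (G := H) (s := {v}ᶜ) p
      (fun z hz => by simp only [Set.mem_compl_iff, Set.mem_singleton_iff]; rintro rfl; exact hp hz) hx hrs
    have h2 := reach_induce (G := H) (s := {v}ᶜ) q
      (fun z hz => by simp only [Set.mem_compl_iff, Set.mem_singleton_iff]; rintro rfl; exact hq hz) hy hrs
    exact h1.trans h2.symm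
  · obtain ⟨p, hp⟩ := hH.exists_walk_length_eq_dist v r
    cases p with
    | nil => exact absurd rfl hvr
    | cons h q => exact ⟨_, h⟩

lemma exists_spanning_walk : ∀ (n : ℕ) {W : Type*} [Fintype W] (H : SimpleGraph W),
    Fintype.card W ≤ n → H.Connected →
    ∃ (a b : W) (p : H.Walk a b), (∀ x, x ∈ p.support) ∧ p.length + 2 ≤ 2 * Fintype.card W := by
  intro n
  induction n with
  | zero =>
    intro W _ H hcard hH
    obtain ⟨r⟩ := hH.nonempty
    have := Fintype.card_pos_iff.mpr ⟨r⟩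
    omega
  | succ n ih =>
    intro W _ H hcard hH
    classical
    obtain ⟨r⟩ := hH.nonempty
    rcases le_or_gt (Fintype.card W) 1 with h1 | h1
    · haveI : Subsingleton W := Fintype.card_le_one_iff_subsingleton.mp h1
      refine ⟨r, r, Walk.nil, fun x => by simp [Subsingleton.elim x r], ?_⟩
      have := Fintype.card_pos_iff.mpr ⟨r⟩
      simp only [Walk.length_nil]
      omega
    · obtain ⟨v, hconn, u, hadj⟩ := exists_noncut H hH h1
      have hcardc : Fintype.card ↥({v}ᶜ : Set W) = Fintype.card W - 1 := by
        have he : (Finset.univ.filter (Membership.mem ({v}ᶜ : Set W))) = Finset.univ.erase v := by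
          ext x; simp [eq_comm]
        rw [Fintype.card_subtype, he, Finset.card_erase_of_mem (Finset.mem_univ v), Finset.card_univ]
      obtain ⟨a, b, p', hsup', hlen'⟩ := ih (H.induce {v}ᶜ) (by omega) hconn
      -- map the walk into H
      let p := p'.map (SimpleGraph.Embedding.induce ({v}ᶜ : Set W)).toHom
      have hsupp : ∀ x : W, x ≠ v → x ∈ p.support := by
        intro x hx
        have : (⟨x, by simpa using hx⟩ : ↥({v}ᶜ : Set W)) ∈ p'.support := hsup' _
        simp only [p, Walk.support_map, List.mem_map]
        exact ⟨_, this, rfl⟩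
      have hu : u ∈ p.support := hsupp u hadj.ne'
      let q :=
        (p.takeUntil u hu).append (Walk.cons hadj.symm (Walk.cons hadj (p.dropUntil u hu)))
      have hlenq : q.length = p.length + 2 := by
        have := congrArg Walk.length (p.take_spec hu)
        rw [Walk.length_append] at this
        simp only [q, Walk.length_append, Walk.length_cons]
        omega
      refine ⟨_, _, q, ?_, ?_⟩
      · intro x
        rcases eq_or_ne x v with rfl | hx
        · simp [q, Walk.mem_support_append_iff]
        · have hxp : x ∈ p.support := hsupp x hx
          rw [← p.take_spec hu, Walk.mem_support_append_iff] at hxp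
          rcases hxp with h | h
          · simp [q, Walk.mem_support_append_iff, h]
            exact Or.inl h
          · simp only [q, Walk.mem_support_append_iff, Walk.support_cons, List.mem_cons]
            right; right; right
            simpa using (by simpa [Walk.support_cons] using h : x ∈ (p.dropUntil u hu).support)
      · have hplen : p.length = p'.length := Walk.length_map _ _
        omega

lemma induce_chain_connected {V : Type*} {G : SimpleGraph V} :
    ∀ (l : List V), l ≠ [] → List.Chain' G.Adj l → (G.induce {v | v ∈ l}).Connected := by
  intro l
  induction l with
  | nil => intro h; exact absurd rfl h
  | cons a t ih =>
    intro _ hc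
    cases t with
    | nil =>
      haveI : Nonempty ↥({v | v ∈ [a]} : Set V) := ⟨⟨a, by simp⟩⟩
      refine Connected.mk ?_
      rintro ⟨x, hx⟩ ⟨y, hy⟩
      simp only [Set.mem_setOf_eq, List.mem_singleton] at hx hy
      subst hx; subst hy; rfl
    | cons b t' =>
      have hab : G.Adj a b := hc.rel_head
      have hct : List.Chain' G.Adj (b :: t') := hc.tail
      have hconn' := ih (by simp) hct
      haveI : Nonempty ↥({v | v ∈ a :: b :: t'} : Set V) := ⟨⟨a, by simp⟩⟩
      refine Connected.mk ?_
      have hsub : ({v | v ∈ b :: t'} : Set V) ⊆ {v | v ∈ a :: b :: t'} := by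
        intro x hx; simp only [Set.mem_setOf_eq] at *; exact List.mem_cons_of_mem a hx
      have hreach : ∀ (x : V) (hx : x ∈ ({v | v ∈ a :: b :: t'} : Set V)),
          (G.induce {v | v ∈ a :: b :: t'}).Reachable ⟨x, hx⟩ ⟨a, by simp⟩ := by
        intro x hx
        rcases List.mem_cons.mp hx with rfl | hx'
        · rfl
        · have h1 : (G.induce {v | v ∈ b :: t'}).Reachable ⟨x, hx'⟩ ⟨b, by simp⟩ :=
            hconn' _ _
          have h2 := h1.map (SimpleGraph.induceHomOfLE G hsub).toHom
          have h3 : (G.induce {v | v ∈ a :: b :: t'}).Adj ⟨b, by simp⟩ ⟨a, by simp⟩ := by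
            simpa using hab.symm
          exact h2.trans h3.reachable
      rintro ⟨x, hx⟩ ⟨y, hy⟩
      exact (hreach x hx).trans (hreach y hy).symm

/-- A finite nonempty connected simple graph can be covered by at most ⌈|V|/k⌉ connected
    subgraphs of at most 2k vertices each. -/
theorem connected_graph_cover {V : Type*} [Fintype V] [Nonempty V]
    (G : SimpleGraph V) (hG : G.Connected) (k : ℕ) (hk : 1 ≤ k) :
    ∃ (m : ℕ) (f : Fin m → Set V),
      m ≤ Nat.ceil ((Fintype.card V : ℚ) / k) ∧
      (∀ v : V, ∃ i, v ∈ f i) ∧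
      (∀ i, (G.induce (f i)).Connected) ∧
      (∀ i, Nat.card (f i) ≤ 2 * k) := by
  classical
  set n := Fintype.card V with hn
  have hn1 : 1 ≤ n := Fintype.card_pos
  obtain ⟨a, b, p, hsup, hlen⟩ := exists_spanning_walk n G le_rfl hG
  set L := p.length with hL
  set s := p.support with hs
  have hslen : s.length = L + 1 := p.length_support
  have hLn : L + 2 ≤ 2 * n := hlen
  set m := L / (2 * k) + 1 with hm
  have hkpos : 0 < 2 * k := by omega
  refine ⟨m, fun i => {v | v ∈ (s.drop (2 * k * i.1)).take (2 * k)}, ?_, ?_, ?_, ?_⟩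
  · -- m ≤ ceil(n/k)
    have hdiv : L / (2 * k) * k ≤ n - 1 := by
      have h1 : L / (2 * k) ≤ (2 * n - 2) / (2 * k) := Nat.div_le_div_right (by omega)
      have h2 : (2 * n - 2) / (2 * k) = (n - 1) / k := by
        rw [show 2 * n - 2 = 2 * (n - 1) by omega, Nat.mul_div_mul_left _ _ (by norm_num)]
      have h3 : (n - 1) / k * k ≤ n - 1 := Nat.div_mul_le_self _ _
      calc L / (2 * k) * k ≤ (n - 1) / k * k := by
            rw [← h2]; exact Nat.mul_le_mul_right _ h1
        _ ≤ n - 1 := h3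
    have : (↑(L / (2 * k)) : ℚ) < (n : ℚ) / (k : ℚ) := by
      rw [lt_div_iff₀ (by exact_mod_cast hk : (0:ℚ) < k)]
      have : ((L / (2 * k)) * k : ℕ) < n := by omega
      exact_mod_cast this
    have := Nat.lt_ceil.mpr this
    omega
  · -- cover
    intro v
    obtain ⟨j, hj, hjv⟩ := List.mem_iff_getElem.mp (hsup v)
    have hjL : j ≤ L := by omega
    have hiL : j / (2 * k) < m := by
      have := Nat.div_le_div_right (c := 2 * k) hjL
      omega
    refine ⟨⟨j / (2 * k), hiL⟩, ?_⟩
    simp only [Set.mem_setOf_eq]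
    rw [List.mem_iff_getElem]
    have hr : j % (2 * k) < 2 * k := Nat.mod_lt _ hkpos
    have hj2 : 2 * k * (j / (2 * k)) + j % (2 * k) = j := Nat.div_add_mod j (2 * k)
    refine ⟨j % (2 * k), ?_, ?_⟩
    · simp only [List.length_take, List.length_drop]
      omega
    · simp only [List.getElem_take, List.getElem_drop, hj2]
      exact hjv
  · -- connected
    intro i
    apply induce_chain_connected
    · have h2ki : 2 * k * i.1 ≤ L := by
        have hi := i.2
        have : i.1 ≤ L / (2 * k) := by omega
        calc 2 * k * i.1 ≤ 2 * k * (L / (2 * k)) := Nat.mul_le_mul_left _ this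
          _ ≤ L := Nat.mul_div_le _ _
      intro hnil
      have := congrArg List.length hnil
      simp only [List.length_take, List.length_drop, List.length_nil] at this
      omega
    · exact (p.isChain_adj_support.drop _).take _
  · -- card
    intro i
    set l := (s.drop (2 * k * i.1)).take (2 * k) with hl
    show Nat.card ({v | v ∈ l} : Set V) ≤ 2 * k
    have : ({v | v ∈ l} : Set V) = ↑l.toFinset := by ext x; simp
    rw [this, Nat.card_coe_set_eq, Set.ncard_coe_finset]
    calc l.toFinset.card ≤ l.length := l.toFinset_card_le
      _ ≤ 2 * k := by simp [hl]
end

section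
/- Let d ≥ 2, δ ∈ (0,d), h* > 0, and define h_x = h* for x = 0 and h_x = h*/|x|₁^δ for x ≠ 0. Then there is a constant c₅ > 0, depending only on d, δ, h*, such that for every nonempty finite subset Λ ⊂ ℤ^d one has ∑_{x ∈ Λ} h_x ≤ c₅ · |Λ|^{1 - δ/d}. -/
/-!
Peel `Λ` off one point at a time, always removing a point `a` of largest ℓ¹ norm `r`. When `k`
points are left they all lie in the ℓ¹ ball of radius `r`, which has at most `(2r+1)^d ≤ (3r)^d`
lattice points, so `h_a ≤ 3^δ h* k^(-δ/d)`. Summing over `k ≤ |Λ|` and comparing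
`∑ k^(-δ/d)` with `|Λ|^(1-δ/d) / (1-δ/d)` through the telescoping form of Bernoulli's inequality
gives the bound.
-/

open Finset

theorem Finset.sum_le_sum_range_of_le_at_max {ι α M : Type*} [DecidableEq ι] [LinearOrder α]
    [AddCommMonoid M] [PartialOrder M] [IsOrderedAddMonoid M]
    (N : ι → α) (w : ι → M) (φ : ℕ → M)
    (hw : ∀ s : Finset ι, ∀ a ∈ s, (∀ x ∈ s, N x ≤ N a) → w a ≤ φ #s) (Λ : Finset ι) :
    ∑ x ∈ Λ, w x ≤ ∑ k ∈ range #Λ, φ (k + 1) := by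
  induction Λ using Finset.induction_on_max_value N with
  | empty => simp
  | insert a s ha hmax ih =>
    have hwa := hw (insert a s) a (mem_insert_self a s)
      (by simpa only [forall_mem_insert, le_refl, true_and] using hmax)
    rw [card_insert_of_notMem ha] at hwa
    rw [sum_insert ha, card_insert_of_notMem ha, sum_range_succ, add_comm]
    exact add_le_add ih hwa

theorem Real.mul_rpow_sub_one_le_rpow_sub_rpow_sub_one {x q : ℝ} (hx : 1 ≤ x) (hq0 : 0 ≤ q)
    (hq1 : q ≤ 1) : q * x ^ (q - 1) ≤ x ^ q - (x - 1) ^ q := by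
  have hx0 : 0 < x := by linarith
  have hinv : x⁻¹ ≤ 1 := inv_le_one_of_one_le₀ hx
  have hbern : (1 + -x⁻¹) ^ q ≤ 1 + q * -x⁻¹ :=
    rpow_one_add_le_one_add_mul_self (by linarith) hq0 hq1
  have hsplit : x - 1 = x * (1 + -x⁻¹) := by field_simp; ring
  rw [hsplit, Real.mul_rpow hx0.le (by linarith), Real.rpow_sub_one hx0.ne']
  have := mul_le_mul_of_nonneg_left hbern (Real.rpow_nonneg hx0.le q)
  have hexpand : x ^ q * (1 + q * -x⁻¹) = x ^ q - q * (x ^ q / x) := by field_simp; ring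
  linarith

theorem Real.sum_range_rpow_neg_le {p : ℝ} (hp0 : 0 ≤ p) (hp1 : p < 1) (n : ℕ) :
    ∑ k ∈ range n, ((k : ℝ) + 1) ^ (-p) ≤ (n : ℝ) ^ (1 - p) / (1 - p) := by
  rw [le_div_iff₀ (by linarith), sum_mul]
  calc ∑ k ∈ range n, ((k : ℝ) + 1) ^ (-p) * (1 - p)
      ≤ ∑ k ∈ range n, ((((k + 1 : ℕ) : ℝ)) ^ (1 - p) - ((k : ℕ) : ℝ) ^ (1 - p)) := by
        refine sum_le_sum fun k _ => ?_
        have := Real.mul_rpow_sub_one_le_rpow_sub_rpow_sub_one (x := (k : ℝ) + 1) (q := 1 - p)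
          (by simp) (by linarith) (by linarith)
        push_cast
        rw [mul_comm]
        simpa using this
    _ = (n : ℝ) ^ (1 - p) := by
        rw [sum_range_sub (fun k => ((k : ℕ) : ℝ) ^ (1 - p))]
        simp [Real.zero_rpow (by linarith : 1 - p ≠ 0)]

def l1Norm {d : ℕ} (x : Fin d → ℤ) : ℕ := ∑ i, (x i).natAbs

theorem natAbs_le_l1Norm {d : ℕ} (x : Fin d → ℤ) (i : Fin d) : (x i).natAbs ≤ l1Norm x :=
  single_le_sum (f := fun j => (x j).natAbs) (fun _ _ => Nat.zero_le _) (mem_univ i)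

theorem l1Norm_eq_zero {d : ℕ} {x : Fin d → ℤ} : l1Norm x = 0 ↔ x = 0 := by
  simp [l1Norm, sum_eq_zero_iff, funext_iff]

theorem card_le_of_forall_l1Norm_le {d : ℕ} (s : Finset (Fin d → ℤ)) (r : ℕ)
    (hs : ∀ x ∈ s, l1Norm x ≤ r) : #s ≤ (2 * r + 1) ^ d := by
  have hsub : s ⊆ Fintype.piFinset fun _ => Icc (-(r : ℤ)) r := fun x hx ↦ by
    rw [Fintype.mem_piFinset]
    intro i
    have := (natAbs_le_l1Norm x i).trans (hs x hx)
    rw [mem_Icc]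
    omega
  refine (card_le_card hsub).trans_eq ?_
  simp only [Fintype.card_piFinset, Int.card_Icc, prod_const, card_univ, Fintype.card_fin]
  congr 1
  omega

noncomputable def decayingField (h δ : ℝ) {d : ℕ} (x : Fin d → ℤ) : ℝ :=
  if x = 0 then h else h / (l1Norm x : ℝ) ^ δ

theorem decayingField_le_of_forall_l1Norm_le {d : ℕ} (hd : d ≠ 0) {h δ : ℝ} (hh : 0 ≤ h)
    (hδ : 0 ≤ δ) {s : Finset (Fin d → ℤ)} {a : Fin d → ℤ} (ha : a ∈ s)
    (hmax : ∀ x ∈ s, l1Norm x ≤ l1Norm a) :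
    decayingField h δ a ≤ 3 ^ δ * h * (#s : ℝ) ^ (-(δ / d)) := by
  have hcard := card_le_of_forall_l1Norm_le s _ hmax
  have hs : 1 ≤ #s := card_pos.2 ⟨a, ha⟩
  by_cases ha0 : a = 0
  · have hs1 : #s = 1 := by simp [ha0, l1Norm] at hcard; omega
    simp only [decayingField, if_pos ha0, hs1, Nat.cast_one, Real.one_rpow, mul_one]
    exact le_mul_of_one_le_left hh (Real.one_le_rpow (by norm_num) hδ)
  · set r := l1Norm a
    have hr : (1 : ℝ) ≤ r := by
      exact_mod_cast Nat.one_le_iff_ne_zero.2 (mt l1Norm_eq_zero.1 ha0)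
    have hcard' : (#s : ℝ) ≤ (3 * r) ^ d := by
      calc (#s : ℝ) ≤ (2 * r + 1) ^ d := by exact_mod_cast hcard
        _ ≤ (3 * r) ^ d := by gcongr; linarith
    have hpow : (#s : ℝ) ^ (δ / d) ≤ (3 * r) ^ δ := by
      calc (#s : ℝ) ^ (δ / d) ≤ ((3 * r) ^ d) ^ (δ / d) := by gcongr
        _ = (3 * r) ^ δ := by
          rw [← Real.rpow_natCast, ← Real.rpow_mul (by positivity),
            mul_div_cancel₀ _ (by exact_mod_cast hd)]
    rw [decayingField, if_neg ha0, Real.rpow_neg (by positivity), ← div_eq_mul_inv]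
    calc h / (r : ℝ) ^ δ = 3 ^ δ * h / (3 * r) ^ δ := by
          rw [Real.mul_rpow (by norm_num) (by positivity)]
          field_simp
      _ ≤ 3 ^ δ * h / (#s : ℝ) ^ (δ / d) := by
          gcongr

theorem field_sum_bound_general (d : ℕ) (δ hstar : ℝ)
    (hδ0 : 0 < δ) (hδd : δ < d) (hh : 0 < hstar) :
    ∃ c₅ : ℝ, 0 < c₅ ∧
      ∀ Λ : Finset (Fin d → ℤ), Λ.Nonempty →
        (∑ x ∈ Λ, if x = 0 then hstar else hstar / (∑ i, (|x i| : ℝ)) ^ δ) ≤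
          c₅ * (Λ.card : ℝ) ^ (1 - δ / d) := by
  have hd : d ≠ 0 := by rintro rfl; simp at hδd; linarith
  have hp : δ / d < 1 := (div_lt_one (by positivity)).2 hδd
  have hp0 : 0 ≤ δ / d := by positivity
  refine ⟨3 ^ δ * hstar / (1 - δ / d), div_pos (by positivity) (by linarith), fun Λ _ => ?_⟩
  have hsummand (x : Fin d → ℤ) :
      (if x = 0 then hstar else hstar / (∑ i, (|x i| : ℝ)) ^ δ) = decayingField hstar δ x := by
    simp [decayingField, l1Norm, Nat.cast_natAbs]
  simp only [hsummand]
  calc ∑ x ∈ Λ, decayingField hstar δ x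
      ≤ ∑ k ∈ range #Λ, 3 ^ δ * hstar * ((k + 1 : ℕ) : ℝ) ^ (-(δ / d)) :=
        sum_le_sum_range_of_le_at_max l1Norm _ (fun k => 3 ^ δ * hstar * (k : ℝ) ^ (-(δ / d)))
          (fun _ _ ha hmax =>
          decayingField_le_of_forall_l1Norm_le hd hh.le hδ0.le ha hmax) Λ
    _ = 3 ^ δ * hstar * ∑ k ∈ range #Λ, ((k : ℝ) + 1) ^ (-(δ / d)) := by
        rw [mul_sum]; push_cast; rfl
    _ ≤ 3 ^ δ * hstar * ((#Λ : ℝ) ^ (1 - δ / d) / (1 - δ / d)) := by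
        gcongr
        exact Real.sum_range_rpow_neg_le hp0 hp _
    _ = 3 ^ δ * hstar / (1 - δ / d) * (#Λ : ℝ) ^ (1 - δ / d) := by ring

/-- For d ≥ 2, 0 < δ < d, h* > 0 and the decaying field h_x = h*/|x|₁^δ (h₀ = h*),
    there is c₅ > 0 with ∑_{x ∈ Λ} h_x ≤ c₅ |Λ|^{1-δ/d} for all nonempty finite Λ. -/
theorem field_sum_bound (d : ℕ) (hd : 2 ≤ d) (δ hstar : ℝ)
    (hδ0 : 0 < δ) (hδd : δ < d) (hh : 0 < hstar) :
    ∃ c₅ : ℝ, 0 < c₅ ∧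
      ∀ Λ : Finset (Fin d → ℤ), Λ.Nonempty →
        (∑ x ∈ Λ, if x = 0 then hstar else hstar / (∑ i, (|x i| : ℝ)) ^ δ) ≤
          c₅ * (Λ.card : ℝ) ^ (1 - δ / d) :=
  field_sum_bound_general d δ hstar hδ0 hδd hh
end

section
/- Let d ≥ 2, α > d, J > 0, and set J_{xy} = J/|x-y|₁^α for x ≠ y. Then there exists K_α > 0, depending only on α, d, J, such that for every nonempty finite Λ ⊂ ℤ^d the surface energy F_Λ = ∑_{x ∈ Λ, y ∈ Λ^c} J_{xy} satisfies F_Λ ≥ K_α · |Λ|^{2 - α/d}. -/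
lemma aux_int (β : ℝ) (hβ : 1 < β) :
    Summable (fun n : ℤ => ((1:ℝ) + |(n:ℝ)|) ^ (-β)) := by
  have h := (Real.summable_one_div_int_add_rpow (1/2) β).mpr hβ
  refine h.of_nonneg_of_le (fun n => by positivity) (fun n => ?_)
  have habs : (0:ℝ) < |(n:ℝ) + 1/2| := by
    rcases le_or_gt 0 n with h0 | h0
    · have : (0:ℝ) ≤ (n:ℝ) := by exact_mod_cast h0
      rw [abs_of_pos (by linarith)]; linarith
    · have hn1 : n ≤ -1 := by omega
      have : (n:ℝ) ≤ -1 := by exact_mod_cast hn1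
      rw [abs_of_neg (by linarith)]; linarith
  have hle : |(n:ℝ) + 1/2| ≤ 1 + |(n:ℝ)| := by
    calc |(n:ℝ) + 1/2| ≤ |(n:ℝ)| + |(1:ℝ)/2| := abs_add_le _ _
      _ ≤ 1 + |(n:ℝ)| := by rw [abs_of_pos (by norm_num : (0:ℝ) < 1/2)]; linarith
  rw [Real.rpow_neg (by positivity), ← one_div]
  exact one_div_le_one_div_of_le (Real.rpow_pos_of_pos habs β)
    (Real.rpow_le_rpow habs.le hle (by linarith))

lemma aux_pi (β : ℝ) (hβ : 1 < β) (d : ℕ) :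
    Summable (fun z : Fin d → ℤ => ∏ i, ((1:ℝ) + |((z i : ℤ) : ℝ)|) ^ (-β)) := by
  induction d with
  | zero =>
      haveI : Finite (Fin 0 → ℤ) := Finite.of_subsingleton
      exact Summable.of_finite
  | succ d ih =>
      have hprod := (aux_int β hβ).mul_of_nonneg ih
        (fun n => by positivity) (fun z => by positivity)
      have := ((Fin.consEquiv (fun _ : Fin (d+1) => ℤ)).summable_iff
        (f := fun z : Fin (d+1) → ℤ => ∏ i, ((1:ℝ) + |((z i : ℤ) : ℝ)|) ^ (-β))).mp ?_
      · exact this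
      · refine hprod.congr fun p => ?_
        simp [Function.comp, Fin.prod_univ_succ]

lemma ell1_summable (d : ℕ) (hd : 0 < d) (α J : ℝ) (hα : (d:ℝ) < α) (hJ : 0 ≤ J)
    (x : Fin d → ℤ) :
    Summable (fun y : Fin d → ℤ => J / (∑ i, (|x i - y i| : ℝ)) ^ α) := by
  have hd0 : (0:ℝ) < d := by exact_mod_cast hd
  set β : ℝ := α / d with hβdef
  have hβ : 1 < β := (one_lt_div hd0).mpr hα
  have hβ0 : 0 < β := lt_trans one_pos hβ
  have hα0 : 0 < α := lt_trans hd0 hα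
  -- translated summable product
  have hpi := aux_pi β hβ d
  have hpi2 : Summable (fun y : Fin d → ℤ =>
      ∏ i, ((1:ℝ) + |((x i - y i : ℤ) : ℝ)|) ^ (-β)) := by
    have := hpi.comp_injective (Equiv.subLeft x).injective
    refine this.congr fun y => ?_
    simp [Function.comp, Equiv.subLeft]
  refine (hpi2.mul_left (J * 2 ^ α)).of_nonneg_of_le (fun y => by positivity) (fun y => ?_)
  by_cases hxy : y = x
  · subst hxy
    simp only [sub_self, abs_zero, Int.cast_zero, Finset.sum_const_zero]
    rw [Real.zero_rpow (ne_of_gt hα0), div_zero]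
    positivity
  · set S : ℝ := ∑ i, (|x i - y i| : ℝ) with hSdef
    have hterm : ∀ i, (0:ℝ) ≤ (|x i - y i| : ℝ) := fun i => by positivity
    have hS1 : 1 ≤ S := by
      have : x ≠ y := fun h => hxy h.symm
      obtain ⟨i, hi⟩ := Function.ne_iff.mp this
      have h1 : (1:ℝ) ≤ (|x i - y i| : ℝ) := by
        have : 1 ≤ |x i - y i| := Int.one_le_abs (sub_ne_zero.mpr hi)
        exact_mod_cast this
      calc (1:ℝ) ≤ (|x i - y i| : ℝ) := h1
        _ ≤ S := Finset.single_le_sum (fun j _ => hterm j) (Finset.mem_univ i)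
    have hS0 : 0 < S := lt_of_lt_of_le one_pos hS1
    set P : ℝ := ∏ i, ((1:ℝ) + |((x i - y i : ℤ) : ℝ)|) with hPdef
    have hP0 : 0 < P := Finset.prod_pos (fun i _ => by positivity)
    have hPle : P ≤ (2 * S) ^ d := by
      have : ∀ i ∈ Finset.univ, ((1:ℝ) + |((x i - y i : ℤ) : ℝ)|) ≤ 2 * S := by
        intro i _
        have h1 : (|x i - y i| : ℝ) ≤ S :=
          Finset.single_le_sum (fun j _ => hterm j) (Finset.mem_univ i)
        have h2 : |((x i - y i : ℤ) : ℝ)| = (|x i - y i| : ℝ) := by push_cast; ring_nf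
        rw [h2]; linarith
      have h3 : P ≤ ∏ _i : Fin d, (2 * S) :=
        Finset.prod_le_prod (fun i _ => by positivity) this
      simpa [Finset.prod_const] using h3
    -- ∏ (1+|t i|)^(-β) = P^(-β) ≥ ((2S)^d)^(-β) = (2S)^(-α)
    have hprod_eq : (∏ i, ((1:ℝ) + |((x i - y i : ℤ) : ℝ)|) ^ (-β)) = P ^ (-β) := by
      exact Real.finset_prod_rpow Finset.univ _ (fun i _ => by positivity) (-β)
    have hkey : (2 * S) ^ (-α) ≤ P ^ (-β) := by
      have h1 : ((2*S) ^ d : ℝ) ^ (-β) ≤ P ^ (-β) :=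
        Real.rpow_le_rpow_of_nonpos hP0 hPle (by linarith)
      have h2 : ((2*S) ^ d : ℝ) ^ (-β) = (2*S) ^ (-α) := by
        rw [← Real.rpow_natCast (2*S) d, ← Real.rpow_mul (by positivity)]
        congr 1
        rw [hβdef]
        field_simp
      rwa [h2] at h1
    rw [hprod_eq]
    calc J / S ^ α = J * S ^ (-α) := by
          rw [Real.rpow_neg hS0.le, div_eq_mul_inv]
      _ = (J * 2 ^ α) * ((2:ℝ) ^ (-α) * S ^ (-α)) := by
          rw [← mul_assoc, mul_assoc J, ← Real.rpow_add (by norm_num : (0:ℝ) < 2)]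
          simp
      _ = (J * 2 ^ α) * (2 * S) ^ (-α) := by
          rw [Real.mul_rpow (by norm_num) hS0.le]
      _ ≤ (J * 2 ^ α) * P ^ (-β) := by
          apply mul_le_mul_of_nonneg_left hkey
          positivity

set_option maxHeartbeats 1000000 in
/-- For d ≥ 2, α > d, J > 0, there is K_α > 0 such that for every nonempty finite Λ ⊂ ℤ^d,
    the surface energy F_Λ = ∑_{x∈Λ, y∉Λ} J/|x-y|₁^α satisfies F_Λ ≥ K_α |Λ|^{2-α/d}. -/
theorem surface_energy_lower (d : ℕ) (hd : 2 ≤ d) (α J : ℝ) (hα : (d : ℝ) < α) (hJ : 0 < J) :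
    ∃ K : ℝ, 0 < K ∧
      ∀ Λ : Finset (Fin d → ℤ), Λ.Nonempty →
        K * (Λ.card : ℝ) ^ (2 - α / d) ≤
          ∑ x ∈ Λ, ∑' y : {y : Fin d → ℤ // y ∉ Λ},
            J / (∑ i, (|x i - y.1 i| : ℝ)) ^ α := by
  have hdpos : 0 < d := by omega
  have hdR : (0:ℝ) < (d:ℝ) := by exact_mod_cast hdpos
  have hα0 : 0 < α := lt_trans hdR hα
  refine ⟨J / (3 * (d:ℝ)) ^ α, by positivity, fun Λ hΛ => ?_⟩
  set n : ℕ := Λ.card with hn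
  have hn1 : 1 ≤ n := hΛ.card_pos
  have hnR : (1:ℝ) ≤ (n:ℕ) := by exact_mod_cast hn1
  have hn0 : (0:ℝ) < (n:ℕ) := lt_of_lt_of_le one_pos hnR
  set L : ℕ := ⌈((2 * n : ℕ) : ℝ) ^ ((d:ℝ)⁻¹)⌉₊ with hLdef
  have hL1 : 1 ≤ L := by
    have : (0:ℝ) < ((2 * n : ℕ) : ℝ) ^ ((d:ℝ)⁻¹) :=
      Real.rpow_pos_of_pos (by positivity) _
    exact Nat.ceil_pos.mpr this
  have hLR : (1:ℝ) ≤ (L:ℝ) := by exact_mod_cast hL1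
  have hLpos : (0:ℝ) < (d:ℝ) * L := by nlinarith
  set A : ℝ := (n:ℝ) ^ ((d:ℝ)⁻¹) with hAdef
  have hA1 : 1 ≤ A := Real.one_le_rpow hnR (by positivity)
  have hLub : (L:ℝ) ≤ 3 * A := by
    have h1 : (L:ℝ) < ((2 * n : ℕ) : ℝ) ^ ((d:ℝ)⁻¹) + 1 :=
      Nat.ceil_lt_add_one (by positivity)
    have h2 : ((2 * n : ℕ) : ℝ) ^ ((d:ℝ)⁻¹) = (2:ℝ) ^ ((d:ℝ)⁻¹) * A := by
      rw [hAdef, ← Real.mul_rpow (by norm_num) (by positivity)]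
      push_cast
      norm_num
    have h3 : (2:ℝ) ^ ((d:ℝ)⁻¹) ≤ 2 := by
      calc (2:ℝ) ^ ((d:ℝ)⁻¹) ≤ (2:ℝ) ^ (1:ℝ) :=
            Real.rpow_le_rpow_of_exponent_le one_le_two
              (by rw [inv_le_one_iff₀]; right; exact_mod_cast hdpos)
        _ = 2 := Real.rpow_one 2
    have h4 : (2:ℝ) ^ ((d:ℝ)⁻¹) * A ≤ 2 * A := by nlinarith
    linarith
  have hboxcard : 2 * n ≤ (2 * L + 1) ^ d := by
    have h1 : ((2 * n : ℕ) : ℝ) ^ ((d:ℝ)⁻¹) ≤ (L:ℝ) := Nat.le_ceil _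
    have h2 : ((2 * n : ℕ) : ℝ) ≤ (L:ℝ) ^ (d:ℕ) := by
      have hp := pow_le_pow_left₀ (by positivity : (0:ℝ) ≤ ((2*n:ℕ):ℝ) ^ ((d:ℝ)⁻¹)) h1 d
      rwa [← Real.rpow_natCast (((2*n:ℕ):ℝ) ^ ((d:ℝ)⁻¹)) d, ← Real.rpow_mul (by positivity),
        inv_mul_cancel₀ (ne_of_gt hdR), Real.rpow_one] at hp
    have h3 : ((L:ℝ)) ^ (d:ℕ) ≤ ((2 * L + 1 : ℕ) : ℝ) ^ (d:ℕ) := by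
      apply pow_le_pow_left₀ (by positivity)
      push_cast; linarith
    have h4 : ((2 * n : ℕ) : ℝ) ≤ ((2 * L + 1 : ℕ) : ℝ) ^ (d:ℕ) := le_trans h2 h3
    exact_mod_cast h4
  -- per-site bound
  have key : ∀ x ∈ Λ, (n:ℝ) * (J / ((d:ℝ) * L) ^ α) ≤
      ∑' y : {y : Fin d → ℤ // y ∉ Λ}, J / (∑ i, (|x i - y.1 i| : ℝ)) ^ α := by
    intro x hx
    classical
    set B : Finset (Fin d → ℤ) := Finset.Icc (fun i => x i - L) (fun i => x i + L) with hBdef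
    have hBcard : B.card = (2 * L + 1) ^ d := by
      rw [hBdef, Pi.card_Icc]
      have hone : ∀ i : Fin d, (Finset.Icc (x i - (L:ℤ)) (x i + (L:ℤ))).card = 2 * L + 1 := by
        intro i
        rw [Int.card_Icc]
        omega
      simp [hone]
    have hsd : n ≤ (B \ Λ).card := by
      have h1 := Finset.le_card_sdiff Λ B
      have h2 : n + n ≤ B.card := by rw [hBcard, ← two_mul]; exact hboxcard
      have h3 : n ≤ B.card - Λ.card := by omega
      exact le_trans h3 h1
    set T : Finset {y : Fin d → ℤ // y ∉ Λ} := (B \ Λ).subtype (fun y => y ∉ Λ) with hTdef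
    have hTcard : n ≤ T.card := by
      rw [hTdef, Finset.card_subtype]
      rwa [Finset.filter_true_of_mem (fun y hy => (Finset.mem_sdiff.mp hy).2)]
    have hsum : Summable (fun y : {y : Fin d → ℤ // y ∉ Λ} =>
        J / (∑ i, (|x i - y.1 i| : ℝ)) ^ α) :=
      (ell1_summable d hdpos α J hα hJ.le x).subtype _
    have hterm : ∀ y ∈ T, J / ((d:ℝ) * L) ^ α ≤ J / (∑ i, (|x i - y.1 i| : ℝ)) ^ α := by
      intro y hy
      have hyB : y.1 ∈ B \ Λ := Finset.mem_subtype.mp hy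
      obtain ⟨hyB', hyΛ⟩ := Finset.mem_sdiff.mp hyB
      have hyx : y.1 ≠ x := fun h => hyΛ (h ▸ hx)
      set S : ℝ := ∑ i, (|x i - y.1 i| : ℝ) with hSdef
      have hterm0 : ∀ i, (0:ℝ) ≤ |(x i : ℝ) - (y.1 i : ℝ)| := fun i => abs_nonneg _
      have hS1 : 1 ≤ S := by
        obtain ⟨i, hi⟩ := Function.ne_iff.mp (Ne.symm hyx)
        have h1 : (1:ℤ) ≤ |x i - y.1 i| := Int.one_le_abs (sub_ne_zero.mpr hi)
        have h1R : (1:ℝ) ≤ |(x i : ℝ) - (y.1 i : ℝ)| := by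
          have : ((|x i - y.1 i| : ℤ) : ℝ) = |(x i : ℝ) - (y.1 i : ℝ)| := by push_cast; ring_nf
          rw [← this]; exact_mod_cast h1
        calc (1:ℝ) ≤ |(x i : ℝ) - (y.1 i : ℝ)| := h1R
          _ ≤ S := Finset.single_le_sum (fun j _ => hterm0 j) (Finset.mem_univ i)
      have hS0 : (0:ℝ) < S := lt_of_lt_of_le one_pos hS1
      have hSle : S ≤ (d:ℝ) * L := by
        rw [hBdef, Finset.mem_Icc] at hyB'
        obtain ⟨hlo, hhi⟩ := hyB'
        have hbound : ∀ i, |(x i : ℝ) - (y.1 i : ℝ)| ≤ (L:ℝ) := by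
          intro i
          have h1 : x i - (L:ℤ) ≤ y.1 i := hlo i
          have h2 : y.1 i ≤ x i + (L:ℤ) := hhi i
          have : |x i - y.1 i| ≤ (L:ℤ) := abs_le.mpr ⟨by omega, by omega⟩
          have hc : ((|x i - y.1 i| : ℤ) : ℝ) = |(x i : ℝ) - (y.1 i : ℝ)| := by
            push_cast; ring_nf
          rw [← hc]; exact_mod_cast this
        calc S ≤ ∑ _i : Fin d, (L:ℝ) := Finset.sum_le_sum (fun i _ => hbound i)
          _ = (d:ℝ) * L := by simp [mul_comm]
      have hSα : (0:ℝ) < S ^ α := Real.rpow_pos_of_pos hS0 α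
      have hle : S ^ α ≤ ((d:ℝ) * L) ^ α := Real.rpow_le_rpow hS0.le hSle hα0.le
      gcongr
    have hnonneg : ∀ y : {y : Fin d → ℤ // y ∉ Λ},
        0 ≤ J / (∑ i, (|x i - y.1 i| : ℝ)) ^ α := fun y =>
      div_nonneg hJ.le (Real.rpow_nonneg (Finset.sum_nonneg fun i _ => abs_nonneg _) _)
    have htsum := hsum.sum_le_tsum T (fun y _ => hnonneg y)
    calc (n:ℝ) * (J / ((d:ℝ) * L) ^ α)
        ≤ (T.card : ℝ) * (J / ((d:ℝ) * L) ^ α) := by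
          have : (n:ℝ) ≤ (T.card : ℝ) := by exact_mod_cast hTcard
          exact mul_le_mul_of_nonneg_right this
            (div_nonneg hJ.le (Real.rpow_nonneg hLpos.le _))
      _ ≤ ∑ y ∈ T, J / (∑ i, (|x i - y.1 i| : ℝ)) ^ α := by
          rw [← nsmul_eq_mul]
          exact Finset.card_nsmul_le_sum T _ _ hterm
      _ ≤ _ := htsum
  -- assemble
  have hC : (0:ℝ) < ((d:ℝ) * L) ^ α := Real.rpow_pos_of_pos hLpos α
  have hb : ((d:ℝ) * L) ^ α ≤ (3 * (d:ℝ)) ^ α * (n:ℝ) ^ (α / d) := by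
    have h1 : (d:ℝ) * L ≤ (3 * (d:ℝ)) * A := by nlinarith
    have h2 : ((d:ℝ) * L) ^ α ≤ ((3 * (d:ℝ)) * A) ^ α :=
      Real.rpow_le_rpow hLpos.le h1 hα0.le
    have h3 : ((3 * (d:ℝ)) * A) ^ α = (3 * (d:ℝ)) ^ α * A ^ α :=
      Real.mul_rpow (by positivity) (by positivity)
    have h4 : A ^ α = (n:ℝ) ^ (α / d) := by
      rw [hAdef, ← Real.rpow_mul (by positivity)]
      congr 1
      field_simp
    rw [h3, h4] at h2
    exact h2
  have hEq : (n:ℝ) ^ (2 - α / d) = (n:ℝ) ^ (2:ℕ) / (n:ℝ) ^ (α / d) := by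
    rw [Real.rpow_sub hn0]
    congr 1
    rw [← Real.rpow_natCast (n:ℝ) 2]
    norm_num
  calc J / (3 * (d:ℝ)) ^ α * (n:ℝ) ^ (2 - α / d)
      = (J * (n:ℝ) ^ (2:ℕ)) / ((3 * (d:ℝ)) ^ α * (n:ℝ) ^ (α / d)) := by
        rw [hEq, div_mul_div_comm]
    _ ≤ (J * (n:ℝ) ^ (2:ℕ)) / (((d:ℝ) * L) ^ α) := by gcongr
    _ = (n:ℝ) * ((n:ℝ) * (J / (((d:ℝ) * L) ^ α))) := by ring
    _ = ∑ _x ∈ Λ, (n:ℝ) * (J / (((d:ℝ) * L) ^ α)) := by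
        rw [Finset.sum_const, ← hn, nsmul_eq_mul]
    _ ≤ ∑ x ∈ Λ, ∑' y : {y : Fin d → ℤ // y ∉ Λ},
          J / (∑ i, (|x i - y.1 i| : ℝ)) ^ α := Finset.sum_le_sum key
end

section
/- Let d ≥ 2 and let Λ ⊂ ℤ^d be a nonempty finite set. Then |Λ|^{1 - 1/d} ≤ |∂_in Λ|, where ∂_in Λ is the inner boundary of Λ. -/
open Finset

open Classical in
noncomputable def innerBd {n : ℕ} (Λ : Finset (Fin n → ℤ)) : Finset (Fin n → ℤ) :=
  Λ.filter (fun x => ∃ y, y ∉ Λ ∧ ∑ i, (x i - y i).natAbs = 1)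

lemma exists_line_max {n : ℕ} (Λ : Finset (Fin n → ℤ)) (i : Fin n) {x : Fin n → ℤ}
    (hx : x ∈ Λ) : ∃ z ∈ innerBd Λ, ∀ j, j ≠ i → z j = x j := by
  classical
  set M : Finset ℤ := (Λ.filter fun z => ∀ j, j ≠ i → z j = x j).image (fun z => z i) with hM
  have hMne : M.Nonempty := ⟨x i, mem_image.2 ⟨x, by simp [hx], rfl⟩⟩
  set m := M.max' hMne with hm
  obtain ⟨z, hz, hzi⟩ := mem_image.1 (M.max'_mem hMne)
  rw [mem_filter] at hz
  refine ⟨z, ?_, hz.2⟩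
  rw [innerBd, mem_filter]
  refine ⟨hz.1, Function.update z i (m + 1), ?_, ?_⟩
  · intro hy
    have hyM : (m + 1) ∈ M := by
      refine mem_image.2 ⟨_, mem_filter.2 ⟨hy, fun j hj => ?_⟩, by simp⟩
      rw [Function.update_of_ne hj]; exact hz.2 j hj
    have := M.le_max' _ hyM
    omega
  · rw [Finset.sum_eq_single_of_mem i (mem_univ i)]
    · simp [hzi, hm]
    · intro j _ hj
      rw [Function.update_of_ne hj, sub_self, Int.natAbs_zero]

lemma innerBd_nonempty {n : ℕ} (Λ : Finset (Fin (n+1) → ℤ)) (hΛ : Λ.Nonempty) :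
    (innerBd Λ).Nonempty := by
  obtain ⟨x, hx⟩ := hΛ
  obtain ⟨z, hz, -⟩ := exists_line_max Λ 0 hx
  exact ⟨z, hz⟩

lemma main_ind : ∀ d : ℕ, ∀ Λ : Finset (Fin (d+1) → ℤ), Λ.Nonempty →
    (Λ.card : ℝ) ^ ((d : ℝ) / (d+1)) ≤ ((innerBd Λ).card : ℝ) := by
  intro d
  induction d with
  | zero =>
    intro Λ hΛ
    have h := innerBd_nonempty Λ hΛ
    have : 1 ≤ ((innerBd Λ).card : ℝ) := by exact_mod_cast Finset.card_pos.2 h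
    simpa using this
  | succ d IH =>
    intro Λ hΛ
    classical
    set L : Fin (d+2) := Fin.last (d+1) with hL
    set T : Finset ℤ := Λ.image (fun x => x L) with hT
    set res : (Fin (d+2) → ℤ) → (Fin (d+1) → ℤ) := fun x i => x i.castSucc with hres
    set S : ℤ → Finset (Fin (d+1) → ℤ) :=
      fun t => (Λ.filter fun x => x L = t).image res with hS
    set B := innerBd Λ with hB
    -- fiberwise card decomposition
    have c1 : Λ.card = ∑ t ∈ T, (Λ.filter fun x => x L = t).card :=
      card_eq_sum_card_fiberwise (fun x hx => mem_image_of_mem _ hx)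
    -- injectivity of res on a fiber
    have resinj : ∀ t : ℤ, Set.InjOn res (Λ.filter fun x => x L = t) := by
      intro t x hx x' hx' hxx
      rw [mem_coe, mem_filter] at hx hx'
      funext j
      refine Fin.lastCases ?_ (fun i => ?_) j
      · rw [hx.2, hx'.2]
      · exact congrFun hxx i
    have c2 : ∀ t : ℤ, (Λ.filter fun x => x L = t).card = (S t).card := by
      intro t
      rw [hS]
      exact (Finset.card_image_of_injOn (resinj t)).symm
    have c3 : ∀ t ∈ T, (S t).Nonempty := by
      intro t ht
      obtain ⟨x, hx, hxt⟩ := mem_image.1 ht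
      exact ⟨res x, mem_image_of_mem _ (mem_filter.2 ⟨hx, hxt⟩)⟩
    -- each fiber injects into the boundary via vertical maxima
    have c4 : ∀ t : ℤ, (Λ.filter fun x => x L = t).card ≤ B.card := by
      intro t
      set f : (Fin (d+2) → ℤ) → (Fin (d+2) → ℤ) := fun x =>
        if h : ∃ z ∈ innerBd Λ, ∀ j, j ≠ L → z j = x j then h.choose else x with hf
      have hfprop : ∀ x ∈ Λ, f x ∈ innerBd Λ ∧ ∀ j, j ≠ L → f x j = x j := by
        intro x hx
        have h := exists_line_max Λ L hx
        rw [hf]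
        simp only [dif_pos h]
        exact ⟨h.choose_spec.1, h.choose_spec.2⟩
      apply Finset.card_le_card_of_injOn f
      · intro x hx
        exact (hfprop x (mem_of_mem_filter x hx)).1
      · intro x hx x' hx' hxx
        rw [mem_coe, mem_filter] at hx hx'
        obtain ⟨-, h2⟩ := hfprop x hx.1
        obtain ⟨-, h2'⟩ := hfprop x' hx'.1
        funext j
        by_cases hj : j = L
        · rw [hj, hx.2, hx'.2]
        · rw [← h2 j hj, ← h2' j hj, hxx]
    -- slice boundaries embed into fibers of the boundary
    have c5 : ∀ t : ℤ, (innerBd (S t)).card ≤ (B.filter fun x => x L = t).card := by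
      intro t
      apply Finset.card_le_card_of_injOn (fun w : Fin (d+1) → ℤ => (Fin.snoc w t : Fin (d+2) → ℤ))
      · intro w hw
        rw [innerBd, mem_coe, mem_filter] at hw
        obtain ⟨hw1, v, hv, hsum⟩ := hw
        obtain ⟨x, hx, hxw⟩ := mem_image.1 hw1
        rw [mem_filter] at hx
        have hxeq : Fin.snoc w t = x := by
          funext j
          refine Fin.lastCases ?_ (fun i => ?_) j
          · rw [Fin.snoc_last, hx.2]
          · rw [Fin.snoc_castSucc, ← hxw]
        rw [mem_coe, mem_filter]
        refine ⟨?_, by simp [hL]⟩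
        rw [hB, innerBd, mem_filter]
        refine ⟨(show Fin.snoc w t ∈ Λ from hxeq ▸ hx.1), Fin.snoc v t, ?_, ?_⟩
        · intro hy
          apply hv
          have : res (Fin.snoc v t) ∈ S t := by
            apply mem_image_of_mem
            rw [mem_filter]
            exact ⟨hy, by simp [hL]⟩
          have hveq : res (Fin.snoc v t) = v := by
            funext i; simp [hres]
          rwa [hveq] at this
        · rw [Fin.sum_univ_castSucc]
          simpa using hsum
      · intro w hw w' hw' hww
        funext i
        have := congrFun hww i.castSucc
        simpa using this
    have c6 : B.card = ∑ t ∈ T, (B.filter fun x => x L = t).card := by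
      apply card_eq_sum_card_fiberwise
      intro x hx
      exact mem_image_of_mem _ (mem_of_mem_filter x hx)
    -- boundary is nonempty
    have hbne : (1:ℝ) ≤ (B.card : ℝ) := by
      exact_mod_cast Finset.card_pos.2 (innerBd_nonempty Λ hΛ)
    have hbpos : (0:ℝ) < (B.card : ℝ) := lt_of_lt_of_le one_pos hbne
    set bb : ℝ := (B.card : ℝ) with hbb
    -- key per-slice real inequality
    have key : ∀ t ∈ T, ((Λ.filter fun x => x L = t).card : ℝ) ≤
        bb ^ (1/(d+1:ℝ)) * ((innerBd (S t)).card : ℝ) := by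
      intro t ht
      set c : ℝ := ((Λ.filter fun x => x L = t).card : ℝ) with hc
      have hc0 : 0 ≤ c := Nat.cast_nonneg _
      have hIH : c ^ ((d:ℝ)/(d+1)) ≤ ((innerBd (S t)).card : ℝ) := by
        have := IH (S t) (c3 t ht)
        rwa [hc, c2 t]
      have hcb : c ≤ bb := by rw [hc, hbb]; exact_mod_cast c4 t
      have hβ0 : (0:ℝ) ≤ ((innerBd (S t)).card : ℝ) := Nat.cast_nonneg _
      have hexp : 1/(d+1:ℝ) + (d:ℝ)/(d+1) = 1 := by field_simp; ring
      calc c = c ^ (1/(d+1:ℝ) + (d:ℝ)/(d+1)) := by rw [hexp, Real.rpow_one]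
        _ = c ^ (1/(d+1:ℝ)) * c ^ ((d:ℝ)/(d+1)) :=
            Real.rpow_add' hc0 (by rw [hexp]; norm_num)
        _ ≤ bb ^ (1/(d+1:ℝ)) * ((innerBd (S t)).card : ℝ) := by
            apply mul_le_mul ?_ hIH (by positivity) (by positivity)
            exact Real.rpow_le_rpow hc0 hcb (by positivity)
    -- sum up
    have hΛle : (Λ.card : ℝ) ≤ bb ^ ((d+2:ℝ)/(d+1)) := by
      have h1 : (Λ.card : ℝ) = ∑ t ∈ T, ((Λ.filter fun x => x L = t).card : ℝ) := by
        rw [c1]; push_cast; ring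
      have h2 : ∑ t ∈ T, ((Λ.filter fun x => x L = t).card : ℝ) ≤
          ∑ t ∈ T, bb ^ (1/(d+1:ℝ)) * ((innerBd (S t)).card : ℝ) :=
        Finset.sum_le_sum key
      have h3 : ∑ t ∈ T, bb ^ (1/(d+1:ℝ)) * ((innerBd (S t)).card : ℝ) =
          bb ^ (1/(d+1:ℝ)) * ∑ t ∈ T, ((innerBd (S t)).card : ℝ) := by
        rw [Finset.mul_sum]
      have h4 : ∑ t ∈ T, ((innerBd (S t)).card : ℝ) ≤ bb := by
        rw [hbb]
        calc ∑ t ∈ T, ((innerBd (S t)).card : ℝ)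
            ≤ ∑ t ∈ T, ((B.filter fun x => x L = t).card : ℝ) := by
              apply Finset.sum_le_sum; intro t ht; exact_mod_cast c5 t
          _ = (B.card : ℝ) := by rw [c6]; push_cast; ring
      calc (Λ.card : ℝ) ≤ bb ^ (1/(d+1:ℝ)) * bb := by
            rw [h1]
            exact h2.trans (le_of_eq h3 |>.trans (by
              exact mul_le_mul_of_nonneg_left h4 (by positivity)))
        _ = bb ^ ((d+2:ℝ)/(d+1)) := by
            rw [show (d+2:ℝ)/(d+1) = 1/(d+1) + 1 by field_simp; ring,
              Real.rpow_add hbpos, Real.rpow_one]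
    -- conclude
    have hfin : ((Λ.card : ℝ)) ^ ((d+1:ℝ)/(d+2)) ≤ bb := by
      calc ((Λ.card : ℝ)) ^ ((d+1:ℝ)/(d+2))
          ≤ (bb ^ ((d+2:ℝ)/(d+1))) ^ ((d+1:ℝ)/(d+2)) :=
            Real.rpow_le_rpow (Nat.cast_nonneg _) hΛle (by positivity)
        _ = bb := by
            rw [← Real.rpow_mul (le_of_lt hbpos)]
            rw [show ((d+2:ℝ)/(d+1)) * ((d+1:ℝ)/(d+2)) = 1 by field_simp]
            exact Real.rpow_one bb
    have hcast : ((d+1:ℕ) : ℝ) / ((d+1:ℕ) + 1) = (d+1:ℝ)/(d+2) := by push_cast; ring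
    rw [hcast]
    exact hfin

/-- For d ≥ 2 and Λ ⊂ ℤ^d nonempty finite, |Λ|^{1-1/d} ≤ |∂_in Λ|. -/
theorem card_pow_le_inner_boundary (d : ℕ) (hd : 2 ≤ d)
    (Λ : Finset (Fin d → ℤ)) (hΛ : Λ.Nonempty) :
    (Λ.card : ℝ) ^ (1 - 1 / (d : ℝ)) ≤
      (Nat.card {x : Fin d → ℤ // x ∈ Λ ∧ ∃ y, y ∉ Λ ∧ ∑ i, (x i - y i).natAbs = 1} : ℝ) := by
  obtain ⟨m, rfl⟩ : ∃ m, d = m + 1 := ⟨d - 1, by omega⟩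
  have hcard : (Nat.card {x : Fin (m+1) → ℤ //
      x ∈ Λ ∧ ∃ y, y ∉ Λ ∧ ∑ i, (x i - y i).natAbs = 1}) = (innerBd Λ).card := by
    rw [Nat.card_congr (Equiv.subtypeEquivRight (q := fun x => x ∈ innerBd Λ)
      (fun x => by simp [innerBd, Finset.mem_filter]))]
    exact Nat.card_eq_finsetCard _
  rw [hcard]
  have hexp : 1 - 1 / ((m+1:ℕ) : ℝ) = (m : ℝ) / ((m:ℝ) + 1) := by
    have : ((m:ℝ) + 1) ≠ 0 := by positivity
    push_cast
    field_simp
    ring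
  rw [hexp]
  exact main_ind m Λ hΛ
end

section
/- Let d ≥ 1, r ≥ 1. For a fixed finite collection 𝒞 of cubes of side 2^{rn} in ℤ^d and an integer V ≥ 1, the number of collections 𝒞' of cubes of side 2^{r(n-1)} that are subordinated to 𝒞 (i.e., 𝒞 is a minimal cover of the union of the cubes of 𝒞') and satisfy |𝒞'| = V is at most e^{cV}, where c = (2d+1)·log 2 + d·log(2^{r+1} - 1). -/
/-- The dyadic cube of exponent `e` centered at `2^{e-1} x`: for e ≥ 1 it is
    ∏_i [2^{e-1} x_i - 2^{e-1}, 2^{e-1} x_i + 2^{e-1}] ∩ ℤ^d; for e = 0 it is {x}. -/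
def dyadicCube (d e : ℕ) (x : Fin d → ℤ) : Set (Fin d → ℤ) :=
  if e = 0 then {x}
  else {z | ∀ i, 2 ^ (e - 1) * x i - 2 ^ (e - 1) ≤ z i ∧ z i ≤ 2 ^ (e - 1) * x i + 2 ^ (e - 1)}

/-- Every small cube is contained in some suitably chosen big cube. -/
lemma exists_cube_subset (d r n : ℕ) (hr : 1 ≤ r) (hn : 1 ≤ n) (y : Fin d → ℤ) :
    ∃ x : Fin d → ℤ, dyadicCube d (r * (n - 1)) y ⊆ dyadicCube d (r * n) x := by
  have he : r * n ≠ 0 := by positivity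
  rcases eq_or_lt_of_le hn with h1 | h2
  · -- n = 1 : small cube is a singleton
    subst h1
    refine ⟨fun i => y i / 2 ^ (r - 1), ?_⟩
    have he' : r * (1 - 1) = 0 := by simp
    intro z hz
    rw [dyadicCube, if_pos he'] at hz
    rw [Set.mem_singleton_iff] at hz
    subst hz
    rw [dyadicCube, if_neg (by simpa using he)]
    intro i
    have hb : (0:ℤ) < 2 ^ (r - 1) := by positivity
    have h1 := Int.emod_nonneg (z i) (ne_of_gt hb)
    have h2 := Int.emod_lt_of_pos (z i) hb
    have h3 := Int.mul_ediv_add_emod (z i) (2 ^ (r - 1))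
    have hmul : r * 1 - 1 = r - 1 := by omega
    rw [hmul]
    constructor <;> linarith
  · -- n ≥ 2 : small cube has positive side
    have he'pos : 1 ≤ r * (n - 1) := by
      have h9 : 1 ≤ n - 1 := by omega
      calc 1 = 1 * 1 := by norm_num
      _ ≤ r * (n - 1) := Nat.mul_le_mul hr h9
    refine ⟨fun i => y i / 2 ^ r, ?_⟩
    intro z hz
    rw [dyadicCube, if_neg (by omega)] at hz
    rw [dyadicCube, if_neg (by simpa using he)]
    intro i
    have hb : (0:ℤ) < 2 ^ r := by positivity
    have hb' : (0:ℤ) < 2 ^ (r * (n - 1) - 1) := by positivity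
    have hB1 : (1:ℤ) ≤ 2 ^ r := hb
    have h1 := Int.emod_nonneg (y i) (ne_of_gt hb)
    have h2 := Int.emod_lt_of_pos (y i) hb
    have h3 := Int.mul_ediv_add_emod (y i) (2 ^ r)
    have hz1 := (hz i).1
    have hz2 := (hz i).2
    have hexp : r * n - 1 = (r * (n - 1) - 1) + r := by
      have : r * (n - 1) + r = r * n := by
        cases n with
        | zero => omega
        | succ m => simp [Nat.mul_succ]
      omega
    have hpow : (2:ℤ) ^ (r * n - 1) = 2 ^ (r * (n - 1) - 1) * 2 ^ r := by
      rw [hexp, pow_add]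
    rw [hpow]
    have e1 : 2 ^ (r * (n - 1) - 1) * 2 ^ r * (y i / 2 ^ r)
        = 2 ^ (r * (n - 1) - 1) * y i - 2 ^ (r * (n - 1) - 1) * (y i % 2 ^ r) := by
      linear_combination (2:ℤ) ^ (r * (n - 1) - 1) * h3
    have k1 : (0:ℤ) ≤ 2 ^ (r * (n - 1) - 1) * (y i % 2 ^ r) := mul_nonneg hb'.le h1
    have k2 : (2:ℤ) ^ (r * (n - 1) - 1) * 1 ≤ 2 ^ (r * (n - 1) - 1) * 2 ^ r :=
      mul_le_mul_of_nonneg_left hB1 hb'.le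
    have k3 : (2:ℤ) ^ (r * (n - 1) - 1) * (y i % 2 ^ r + 1)
        ≤ 2 ^ (r * (n - 1) - 1) * 2 ^ r :=
      mul_le_mul_of_nonneg_left (by linarith) hb'.le
    constructor <;> linarith

open Finset in
/-- If the canonical point of the small cube around `y` lies in a big cube of pattern `x`,
    then `y` is in an explicit box. -/
lemma center_bound (d r n : ℕ) (hr : 1 ≤ r) (hn : 1 ≤ n) (y x : Fin d → ℤ)
    (h : (fun i => 2 ^ (r * (n - 1) - 1) * y i) ∈ dyadicCube d (r * n) x) (i : Fin d) :
    2 ^ (r * n - 1 - (r * (n - 1) - 1)) * x i - 2 ^ r ≤ y i ∧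
      y i ≤ 2 ^ (r * n - 1 - (r * (n - 1) - 1)) * x i + 2 ^ r := by
  have he : r * n ≠ 0 := by positivity
  rw [dyadicCube, if_neg he] at h
  have hi := h i
  dsimp only at hi
  rcases eq_or_lt_of_le hn with h1 | h2
  · -- n = 1
    subst h1
    have ht : r * 1 - 1 - (r * (1 - 1) - 1) = r - 1 := by simp
    simp only [Nat.sub_self, Nat.mul_zero, Nat.zero_sub, pow_zero, one_mul, Nat.mul_one] at hi
    rw [ht]
    have hple : (2:ℤ) ^ (r - 1) ≤ 2 ^ r := by
      apply pow_le_pow_right₀ (by norm_num) (by omega)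
    constructor <;> linarith [hi.1, hi.2]
  · -- n ≥ 2
    have he'pos : 1 ≤ r * (n - 1) := by
      have h9 : 1 ≤ n - 1 := by omega
      calc 1 = 1 * 1 := by norm_num
      _ ≤ r * (n - 1) := Nat.mul_le_mul hr h9
    have hexp : r * n - 1 = (r * (n - 1) - 1) + r := by
      have : r * (n - 1) + r = r * n := by
        cases n with
        | zero => omega
        | succ m => simp [Nat.mul_succ]
      omega
    have ht : r * n - 1 - (r * (n - 1) - 1) = r := by omega
    rw [ht]
    have hpow : (2:ℤ) ^ (r * n - 1) = 2 ^ (r * (n - 1) - 1) * 2 ^ r := by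
      rw [hexp, pow_add]
    rw [hpow] at hi
    have hb' : (0:ℤ) < 2 ^ (r * (n - 1) - 1) := by positivity
    constructor
    · have h' : (2:ℤ) ^ (r * (n - 1) - 1) * (2 ^ r * x i - 2 ^ r)
          ≤ 2 ^ (r * (n - 1) - 1) * y i := by linarith [hi.1]
      linarith [le_of_mul_le_mul_left h' hb']
    · have h' : (2:ℤ) ^ (r * (n - 1) - 1) * y i
          ≤ 2 ^ (r * (n - 1) - 1) * (2 ^ r * x i + 2 ^ r) := by linarith [hi.2]
      linarith [le_of_mul_le_mul_left h' hb']

/-- The canonical point of a small cube belongs to it. -/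
lemma canonical_mem (d e : ℕ) (y : Fin d → ℤ) :
    (fun i => 2 ^ (e - 1) * y i) ∈ dyadicCube d e y := by
  rcases eq_or_ne e 0 with h | h
  · subst h
    rw [dyadicCube, if_pos rfl]
    simp only [Nat.zero_sub, pow_zero, one_mul, Set.mem_singleton_iff]
  · rw [dyadicCube, if_neg h]
    intro i
    have hpos : (0:ℤ) < 2 ^ (e - 1) := by positivity
    show 2 ^ (e - 1) * y i - 2 ^ (e - 1) ≤ 2 ^ (e - 1) * y i ∧
      2 ^ (e - 1) * y i ≤ 2 ^ (e - 1) * y i + 2 ^ (e - 1)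
    constructor <;> linarith

/-- The number of collections 𝒞' of r(n-1)-cubes of cardinality V subordinated to a fixed
    collection 𝒞 of rn-cubes (𝒞 a minimal cover of the union of 𝒞') is at most e^{cV},
    with c = (2d+1) log 2 + d log(2^{r+1} - 1). -/
theorem subordinated_count (d r n V : ℕ) (hd : 1 ≤ d) (hr : 1 ≤ r) (hn : 1 ≤ n) (hV : 1 ≤ V)
    (𝒞 : Finset (Fin d → ℤ)) :
    (Nat.card {𝒞' : Finset (Fin d → ℤ) //
        𝒞'.card = V ∧
        (⋃ y ∈ 𝒞', dyadicCube d (r * (n - 1)) y) ⊆ ⋃ x ∈ 𝒞, dyadicCube d (r * n) x ∧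
        ∀ 𝒟 : Finset (Fin d → ℤ),
          (⋃ y ∈ 𝒞', dyadicCube d (r * (n - 1)) y) ⊆ (⋃ x ∈ 𝒟, dyadicCube d (r * n) x) →
            𝒞.card ≤ 𝒟.card} : ℝ) ≤
      Real.exp ((((2 * d + 1) : ℝ) * Real.log 2 + d * Real.log (2 ^ (r + 1) - 1)) * V) := by
  classical
  set K : ℝ := 2 ^ (r + 1) - 1 with hKdef
  have h4 : (4:ℝ) ≤ 2 ^ (r + 1) := by
    calc (4:ℝ) = 2 ^ 2 := by norm_num
    _ ≤ 2 ^ (r + 1) := by apply pow_le_pow_right₀ (by norm_num) (by omega)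
  have hK : (3:ℝ) ≤ K := by simp only [hKdef]; linarith
  have hKpos : (0:ℝ) < K := by linarith
  -- rewrite the RHS as a power
  have hRHS : Real.exp ((((2 * d + 1) : ℝ) * Real.log 2 + d * Real.log K) * V)
      = ((2:ℝ) ^ (2 * d + 1) * K ^ d) ^ V := by
    have hcast : ((2 * d + 1 : ℕ) : ℝ) = 2 * (d:ℝ) + 1 := by push_cast; ring
    rw [← hcast, ← Real.log_pow, ← Real.log_pow,
      ← Real.log_mul (by positivity) (by positivity),
      mul_comm (Real.log _) (V:ℝ), Real.exp_nat_mul, Real.exp_log (by positivity)]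
  rw [hRHS]
  rcases isEmpty_or_nonempty {𝒞' : Finset (Fin d → ℤ) //
        𝒞'.card = V ∧
        (⋃ y ∈ 𝒞', dyadicCube d (r * (n - 1)) y) ⊆ ⋃ x ∈ 𝒞, dyadicCube d (r * n) x ∧
        ∀ 𝒟 : Finset (Fin d → ℤ),
          (⋃ y ∈ 𝒞', dyadicCube d (r * (n - 1)) y) ⊆ (⋃ x ∈ 𝒟, dyadicCube d (r * n) x) →
            𝒞.card ≤ 𝒟.card} with hE | hNE
  · rw [Nat.card_of_isEmpty]
    simp only [Nat.cast_zero]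
    positivity
  obtain ⟨⟨𝒞₀, h₀card, h₀sub, h₀min⟩⟩ := hNE
  -- the given collection has at most V cubes, by minimality
  have hCV : 𝒞.card ≤ V := by
    choose f hf using exists_cube_subset d r n hr hn
    refine le_trans (h₀min (𝒞₀.image f) ?_) (le_trans Finset.card_image_le h₀card.le)
    intro z hz
    simp only [Set.mem_iUnion] at hz ⊢
    obtain ⟨y, hy, hzy⟩ := hz
    exact ⟨f y, Finset.mem_image_of_mem f hy, hf y hzy⟩
  -- the set of candidate centers
  set t := r * n - 1 - (r * (n - 1) - 1) with htdef
  set S : Finset (Fin d → ℤ) := 𝒞.biUnion (fun x =>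
    Fintype.piFinset fun i => Finset.Icc (2 ^ t * x i - 2 ^ r) (2 ^ t * x i + 2 ^ r)) with hSdef
  -- each admissible collection is a subset of S
  have hsubS : ∀ 𝒞' : Finset (Fin d → ℤ),
      (⋃ y ∈ 𝒞', dyadicCube d (r * (n - 1)) y) ⊆ (⋃ x ∈ 𝒞, dyadicCube d (r * n) x) → 𝒞' ⊆ S := by
    intro 𝒞' hcov y hy
    have hmem : (fun i => 2 ^ (r * (n - 1) - 1) * y i) ∈ ⋃ x ∈ 𝒞, dyadicCube d (r * n) x := by
      apply hcov
      exact Set.mem_biUnion hy (canonical_mem d (r * (n - 1)) y)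
    simp only [Set.mem_iUnion] at hmem
    obtain ⟨x, hx, hmx⟩ := hmem
    refine Finset.mem_biUnion.mpr ⟨x, hx, ?_⟩
    rw [Fintype.mem_piFinset]
    intro i
    rw [Finset.mem_Icc]
    exact center_bound d r n hr hn y x hmx i
  -- cardinality of S
  have hbox : ∀ x : Fin d → ℤ,
      (Fintype.piFinset fun i =>
        Finset.Icc (2 ^ t * x i - 2 ^ r) (2 ^ t * x i + 2 ^ r)).card = (2 ^ (r + 1) + 1) ^ d := by
    intro x
    rw [Fintype.card_piFinset]
    have : ∀ i : Fin d,
        (Finset.Icc (2 ^ t * x i - 2 ^ r) (2 ^ t * x i + 2 ^ r)).card = 2 ^ (r + 1) + 1 := by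
      intro i
      rw [Int.card_Icc]
      have : (2 ^ t * x i + 2 ^ r + 1 - (2 ^ t * x i - 2 ^ r)) = ((2 ^ (r + 1) + 1 : ℕ) : ℤ) := by
        push_cast
        ring
      rw [this, Int.toNat_natCast]
    rw [Finset.prod_congr rfl (fun i _ => this i)]
    simp [Finset.prod_const]
  have hScard : S.card ≤ V * (2 ^ (r + 1) + 1) ^ d := by
    calc S.card ≤ ∑ x ∈ 𝒞, (Fintype.piFinset fun i =>
          Finset.Icc (2 ^ t * x i - 2 ^ r) (2 ^ t * x i + 2 ^ r)).card :=
        Finset.card_biUnion_le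
    _ = 𝒞.card * (2 ^ (r + 1) + 1) ^ d := by
        rw [Finset.sum_congr rfl (fun x _ => hbox x), Finset.sum_const, smul_eq_mul]
    _ ≤ V * (2 ^ (r + 1) + 1) ^ d := by
        exact Nat.mul_le_mul_right _ hCV
  -- inject into powersetCard
  have hinj : Nat.card {𝒞' : Finset (Fin d → ℤ) //
        𝒞'.card = V ∧
        (⋃ y ∈ 𝒞', dyadicCube d (r * (n - 1)) y) ⊆ ⋃ x ∈ 𝒞, dyadicCube d (r * n) x ∧
        ∀ 𝒟 : Finset (Fin d → ℤ),
          (⋃ y ∈ 𝒞', dyadicCube d (r * (n - 1)) y) ⊆ (⋃ x ∈ 𝒟, dyadicCube d (r * n) x) →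
            𝒞.card ≤ 𝒟.card} ≤ (S.powersetCard V).card := by
    have h1 := Nat.card_le_card_of_injective
      (α := {𝒞' : Finset (Fin d → ℤ) //
        𝒞'.card = V ∧
        (⋃ y ∈ 𝒞', dyadicCube d (r * (n - 1)) y) ⊆ ⋃ x ∈ 𝒞, dyadicCube d (r * n) x ∧
        ∀ 𝒟 : Finset (Fin d → ℤ),
          (⋃ y ∈ 𝒞', dyadicCube d (r * (n - 1)) y) ⊆ (⋃ x ∈ 𝒟, dyadicCube d (r * n) x) →
            𝒞.card ≤ 𝒟.card})
      (fun C => (⟨C.1, Finset.mem_powersetCard.mpr ⟨hsubS C.1 C.2.2.1, C.2.1⟩⟩ :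
        {s // s ∈ S.powersetCard V}))
      (fun a b hab => by
        apply Subtype.ext
        have h2 := congrArg Subtype.val hab
        simpa using h2)
    rwa [Nat.card_eq_finsetCard] at h1
  -- numerical estimate
  set N₀ : ℕ := V * (2 ^ (r + 1) + 1) ^ d with hN₀def
  have hchoose : (S.powersetCard V).card ≤ N₀.choose V := by
    rw [Finset.card_powersetCard]
    exact Nat.choose_le_choose V hScard
  have hnat : Nat.card {𝒞' : Finset (Fin d → ℤ) //
        𝒞'.card = V ∧
        (⋃ y ∈ 𝒞', dyadicCube d (r * (n - 1)) y) ⊆ ⋃ x ∈ 𝒞, dyadicCube d (r * n) x ∧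
        ∀ 𝒟 : Finset (Fin d → ℤ),
          (⋃ y ∈ 𝒞', dyadicCube d (r * (n - 1)) y) ⊆ (⋃ x ∈ 𝒟, dyadicCube d (r * n) x) →
            𝒞.card ≤ 𝒟.card} ≤ N₀.choose V := le_trans hinj hchoose
  -- pass to reals
  have hfact : (V.factorial : ℝ) * (N₀.choose V : ℝ) ≤ (N₀:ℝ) ^ V := by
    have h1 : V.factorial * N₀.choose V ≤ N₀ ^ V := by
      rw [← Nat.descFactorial_eq_factorial_mul_choose]
      exact Nat.descFactorial_le_pow _ _
    exact_mod_cast h1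
  have hfactpos : (0:ℝ) < V.factorial := by positivity
  have hchooseR : ((N₀.choose V : ℕ) : ℝ) ≤ (N₀:ℝ) ^ V / V.factorial := by
    rw [le_div_iff₀ hfactpos]
    linarith [hfact]
  have hVexp : ((V:ℝ)) ^ V / V.factorial ≤ Real.exp V :=
    Real.pow_div_factorial_le_exp (x := (V:ℝ)) (by positivity) V
  have hexp3 : Real.exp (V:ℝ) ≤ 3 ^ V := by
    rw [← Real.exp_one_rpow (V:ℝ)]
    rw [Real.rpow_natCast]
    apply pow_le_pow_left₀ (Real.exp_pos 1).le
    linarith [Real.exp_one_lt_d9]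
  have hM : ((2:ℝ) ^ (r + 1) + 1) ≤ 2 * K := by
    simp only [hKdef]; linarith
  -- final chain
  calc (Nat.card _ : ℝ) ≤ (N₀.choose V : ℝ) := by exact_mod_cast hnat
  _ ≤ (N₀:ℝ) ^ V / V.factorial := hchooseR
  _ = ((V:ℝ) ^ V / V.factorial) * (((2:ℝ) ^ (r + 1) + 1) ^ d) ^ V := by
      rw [hN₀def]
      push_cast
      rw [mul_pow]
      ring
  _ ≤ Real.exp V * ((2 * K) ^ d) ^ V := by
      apply mul_le_mul hVexp _ (by positivity) (Real.exp_pos _).le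
      apply pow_le_pow_left₀ (by positivity) (pow_le_pow_left₀ (by positivity) hM d)
  _ ≤ 3 ^ V * ((2 * K) ^ d) ^ V := by
      apply mul_le_mul_of_nonneg_right hexp3 (by positivity)
  _ ≤ ((2:ℝ) ^ (2 * d + 1) * K ^ d) ^ V := by
      rw [← mul_pow]
      apply pow_le_pow_left₀ (by positivity)
      have h2d : (3:ℝ) * 2 ^ d ≤ 2 ^ (2 * d + 1) := by
        have : (2:ℝ) ^ (2 * d + 1) = 2 ^ d * 2 ^ d * 2 := by
          rw [two_mul, pow_add, pow_add, pow_one]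
        rw [this]
        have h2d1 : (2:ℝ) ≤ 2 ^ d := by
          calc (2:ℝ) = 2 ^ 1 := (pow_one 2).symm
          _ ≤ 2 ^ d := by apply pow_le_pow_right₀ (by norm_num) hd
        nlinarith [pow_pos (show (0:ℝ) < 2 by norm_num) d]
      calc (3:ℝ) * (2 * K) ^ d = 3 * 2 ^ d * K ^ d := by rw [mul_pow]; ring
      _ ≤ 2 ^ (2 * d + 1) * K ^ d := by
          apply mul_le_mul_of_nonneg_right h2d (by positivity)
end
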